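/- arXiv:2311.17564 — 6 statements merged into one kernel-verified Lean document; each statement's English description precedes it below -/
import Mathlib

section
/- For any two cumulative distribution functions F and G of independent real random variables X ~ F and Y ~ G, the Mann-Whitney functional θ = P(X < Y) + P(X = Y)/2 and the overlap index I₂ = ∫₀¹ G(F⁻¹(1−α/2)) dα − ∫₀¹ G(F⁻¹(α/2)) dα satisfy 0 ≤ I₂ ≤ 2θ. -/
open MeasureTheory ProbabilityTheory Set Filter Topology

section Aux

variable (μ : Measure ℝ) [IsProbabilityMeasure μ]

omit [IsProbabilityMeasure μ] in
/-- Galois connection between the cdf and its generalized inverse. -/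
lemma cdf_quantile_galois {u : ℝ} (hu0 : 0 < u) (hu1 : u < 1) (x : ℝ) :
    sInf {z : ℝ | u ≤ cdf μ z} ≤ x ↔ u ≤ cdf μ x := by
  set S : Set ℝ := {z : ℝ | u ≤ cdf μ z} with hSdef
  have hne : S.Nonempty := by
    obtain ⟨z, hz⟩ := ((tendsto_cdf_atTop μ).eventually (eventually_ge_nhds hu1)).exists
    exact ⟨z, hz⟩
  obtain ⟨z₀, hz₀⟩ : ∃ z₀, cdf μ z₀ < u :=
    ((tendsto_cdf_atBot μ).eventually (eventually_lt_nhds hu0)).exists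
  have hbdd : BddBelow S := by
    refine ⟨z₀, fun z hz => ?_⟩
    by_contra h
    push_neg at h
    exact absurd (le_trans hz (monotone_cdf μ h.le)) (not_le.mpr hz₀)
  constructor
  · intro h
    have hmem : ∀ z, sInf S < z → u ≤ cdf μ z := by
      intro z hz
      obtain ⟨s, hsS, hsz⟩ := exists_lt_of_csInf_lt hne hz
      exact le_trans hsS (monotone_cdf μ hsz.le)
    have h1 : u ≤ cdf μ (sInf S) := by
      have ht : Tendsto (cdf μ) (𝓝[>] (sInf S)) (𝓝 (cdf μ (sInf S))) :=
        ((cdf μ).right_continuous (sInf S)).mono_left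
          (nhdsWithin_mono _ Ioi_subset_Ici_self)
      refine ge_of_tendsto ht ?_
      filter_upwards [self_mem_nhdsWithin] with z hz
      exact hmem z hz
    exact h1.trans (monotone_cdf μ h)
  · intro h
    exact csInf_le hbdd h

variable {Finv : ℝ → ℝ}

omit [IsProbabilityMeasure μ] in
lemma finv_aemeasurable
    (hgal : ∀ u ∈ Ioo (0:ℝ) 1, ∀ x, Finv u ≤ x ↔ u ≤ cdf μ x) :
    AEMeasurable Finv (volume.restrict (Ioo (0:ℝ) 1)) := by
  classical
  set h : ℝ → ℝ := fun u => if u ∈ Ioo (0:ℝ) 1 then Finv u else 0 with hh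
  have hmeas : Measurable h := by
    apply measurable_of_Iic
    intro x
    by_cases hx : (0:ℝ) ≤ x
    · have hset : h ⁻¹' Iic x = (Ioo (0:ℝ) 1 ∩ Iic (cdf μ x)) ∪ (Ioo (0:ℝ) 1)ᶜ := by
        ext u
        by_cases hu : u ∈ Ioo (0:ℝ) 1
        · simp [hh, hu, hu.1, hu.2, hgal u hu x]
        · have hu' : ¬(0 < u ∧ u < 1) := by simpa [mem_Ioo] using hu
          simp [hh, hu, hu', hx]
      rw [hset]
      exact (measurableSet_Ioo.inter measurableSet_Iic).union measurableSet_Ioo.compl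
    · have hset : h ⁻¹' Iic x = Ioo (0:ℝ) 1 ∩ Iic (cdf μ x) := by
        ext u
        by_cases hu : u ∈ Ioo (0:ℝ) 1
        · simp [hh, hu, hu.1, hu.2, hgal u hu x]
        · have hu' : ¬(0 < u ∧ u < 1) := by simpa [mem_Ioo] using hu
          simp [hh, hu, hu', not_le.mp hx]
      rw [hset]
      exact measurableSet_Ioo.inter measurableSet_Iic
  refine ⟨h, hmeas, ?_⟩
  filter_upwards [ae_restrict_mem measurableSet_Ioo] with u hu
  simp [hh, hu.1, hu.2]

lemma finv_map_eq
    (hgal : ∀ u ∈ Ioo (0:ℝ) 1, ∀ x, Finv u ≤ x ↔ u ≤ cdf μ x) :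
    Measure.map Finv (volume.restrict (Ioo (0:ℝ) 1)) = μ := by
  have hFmeas := finv_aemeasurable μ hgal
  haveI hfin : IsFiniteMeasure (Measure.map Finv (volume.restrict (Ioo (0:ℝ) 1))) := by
    constructor
    rw [Measure.map_apply_of_aemeasurable hFmeas MeasurableSet.univ]
    simp [Measure.restrict_apply, Real.volume_Ioo]
  refine Measure.ext_of_Iic _ μ (fun x => ?_)
  rw [Measure.map_apply_of_aemeasurable hFmeas measurableSet_Iic,
    Measure.restrict_apply' measurableSet_Ioo]
  have hkey : Finv ⁻¹' Iic x ∩ Ioo (0:ℝ) 1 = Iic (cdf μ x) ∩ Ioo (0:ℝ) 1 := by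
    ext u
    simp only [mem_inter_iff, mem_preimage, mem_Iic]
    constructor
    · rintro ⟨h1, h2⟩; exact ⟨(hgal u h2 x).mp h1, h2⟩
    · rintro ⟨h1, h2⟩; exact ⟨(hgal u h2 x).mpr h1, h2⟩
  rw [hkey, ← ofReal_cdf μ x]
  rcases lt_or_ge (cdf μ x) 1 with hc | hc
  · have hset : Iic (cdf μ x) ∩ Ioo (0:ℝ) 1 = Ioc 0 (cdf μ x) := by
      ext u
      simp only [mem_inter_iff, mem_Iic, mem_Ioo, mem_Ioc]
      exact ⟨fun h => ⟨h.2.1, h.1⟩, fun h => ⟨h.2, h.1, lt_of_le_of_lt h.2 hc⟩⟩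
    rw [hset, Real.volume_Ioc]
    simp
  · have hc1 : cdf μ x = 1 := le_antisymm (cdf_le_one μ x) hc
    have hset : Iic (cdf μ x) ∩ Ioo (0:ℝ) 1 = Ioo 0 1 := by
      rw [hc1]; ext u
      simp only [mem_inter_iff, mem_Iic, mem_Ioo]
      exact ⟨fun h => h.2, fun h => ⟨h.2.le, h⟩⟩
    rw [hset, Real.volume_Ioo, hc1]
    norm_num

end Aux

lemma aux_scaleA (f : ℝ → ℝ) :
    ∫ α in Ioo (0:ℝ) 1, f (α/2) = 2 * ∫ u in Ioo (0:ℝ) (1/2), f u := by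
  rw [← integral_Ioc_eq_integral_Ioo, ← intervalIntegral.integral_of_le zero_le_one,
    intervalIntegral.integral_comp_div f two_ne_zero]
  rw [show (0:ℝ)/2 = 0 by norm_num, show (1:ℝ)/2 = 1/2 from rfl,
    intervalIntegral.integral_of_le (by norm_num : (0:ℝ) ≤ 1/2),
    integral_Ioc_eq_integral_Ioo, smul_eq_mul]

lemma aux_scaleB (f : ℝ → ℝ) :
    ∫ α in Ioo (0:ℝ) 1, f (1 - α/2) = 2 * ∫ u in Ioo (1/2:ℝ) 1, f u := by
  rw [← integral_Ioc_eq_integral_Ioo, ← intervalIntegral.integral_of_le zero_le_one]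
  have h1 : (∫ x in (0:ℝ)..1, f (1 - x/2))
      = ∫ x in (0:ℝ)..1, (fun y => f (1 - y)) (x/2) := rfl
  rw [h1, intervalIntegral.integral_comp_div (fun y => f (1 - y)) two_ne_zero,
    intervalIntegral.integral_comp_sub_left f 1]
  rw [show (1:ℝ) - 1/2 = 1/2 by norm_num, show (1:ℝ) - 0/2 = 1 by norm_num,
    intervalIntegral.integral_of_le (by norm_num : (1/2:ℝ) ≤ 1),
    integral_Ioc_eq_integral_Ioo, smul_eq_mul]

lemma aux_shift (f : ℝ → ℝ) :
    ∫ u in Ioo (0:ℝ) (1/2), f (u + 1/2) = ∫ u in Ioo (1/2:ℝ) 1, f u := by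
  rw [← integral_Ioc_eq_integral_Ioo,
    ← intervalIntegral.integral_of_le (by norm_num : (0:ℝ) ≤ 1/2),
    intervalIntegral.integral_comp_add_right f (1/2)]
  rw [show (0:ℝ) + 1/2 = 1/2 by norm_num, show (1:ℝ)/2 + 1/2 = 1 by norm_num,
    intervalIntegral.integral_of_le (by norm_num : (1/2:ℝ) ≤ 1),
    integral_Ioc_eq_integral_Ioo]

lemma aux_prod_ge (μ ν : Measure ℝ) [IsProbabilityMeasure μ] [IsProbabilityMeasure ν] :
    ((μ.prod ν) {p : ℝ × ℝ | p.2 ≤ p.1}).toReal = ∫ x, cdf ν x ∂μ := by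
  have hS : MeasurableSet {p : ℝ × ℝ | p.2 ≤ p.1} :=
    measurableSet_le measurable_snd measurable_fst
  rw [Measure.prod_apply hS]
  have hfib : ∀ x : ℝ, ν (Prod.mk x ⁻¹' {p : ℝ × ℝ | p.2 ≤ p.1}) = ENNReal.ofReal (cdf ν x) := by
    intro x
    rw [show Prod.mk x ⁻¹' {p : ℝ × ℝ | p.2 ≤ p.1} = Iic x from rfl, ofReal_cdf]
  simp_rw [hfib]
  rw [integral_eq_lintegral_of_nonneg_ae (ae_of_all _ (cdf_nonneg ν))
    ((cdf ν).mono.measurable.aestronglyMeasurable)]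

/-- For independent real random variables X ~ F (law μ) and Y ~ G (law ν), the Mann-Whitney
functional θ = P(X<Y) + P(X=Y)/2 and the overlap index
I₂ = ∫₀¹ G(F⁻¹(1−α/2)) dα − ∫₀¹ G(F⁻¹(α/2)) dα satisfy 0 ≤ I₂ ≤ 2θ. -/
theorem overlap_index_nonneg_le_two_theta
    (μ ν : Measure ℝ) [IsProbabilityMeasure μ] [IsProbabilityMeasure ν]
    (F G : ℝ → ℝ) (hF : F = cdf μ) (hG : G = cdf ν)
    (Finv : ℝ → ℝ) (hFinv : ∀ t, Finv t = sInf {x : ℝ | t ≤ F x})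
    (θ I2 : ℝ)
    (hθ : θ = ((μ.prod ν) {p : ℝ × ℝ | p.1 < p.2}).toReal
            + ((μ.prod ν) {p : ℝ × ℝ | p.1 = p.2}).toReal / 2)
    (hI2 : I2 = (∫ α in Ioo (0:ℝ) 1, G (Finv (1 - α/2)))
              - ∫ α in Ioo (0:ℝ) 1, G (Finv (α/2))) :
    0 ≤ I2 ∧ I2 ≤ 2 * θ := by
  subst hF hG
  have hgal : ∀ u ∈ Ioo (0:ℝ) 1, ∀ x, Finv u ≤ x ↔ u ≤ cdf μ x := by
    intro u hu x
    rw [hFinv u]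
    exact cdf_quantile_galois μ hu.1 hu.2 x
  have h12 : (1:ℝ)/2 < 1 := by norm_num
  -- monotonicity of the composition on (0,1)
  have hFinvmono : ∀ u ∈ Ioo (0:ℝ) 1, ∀ v ∈ Ioo (0:ℝ) 1, u ≤ v → Finv u ≤ Finv v := by
    intro u hu v hv huv
    have hv' : v ≤ cdf μ (Finv v) := (hgal v hv (Finv v)).mp le_rfl
    exact (hgal u hu (Finv v)).mpr (huv.trans hv')
  have hfmono : ∀ u ∈ Ioo (0:ℝ) 1, ∀ v ∈ Ioo (0:ℝ) 1, u ≤ v →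
      cdf ν (Finv u) ≤ cdf ν (Finv v) :=
    fun u hu v hv huv => monotone_cdf ν (hFinvmono u hu v hv huv)
  have hFmeas : AEMeasurable Finv (volume.restrict (Ioo (0:ℝ) 1)) := finv_aemeasurable μ hgal
  have hmap : Measure.map Finv (volume.restrict (Ioo (0:ℝ) 1)) = μ := finv_map_eq μ hgal
  have hGmeas : Measurable (cdf ν : ℝ → ℝ) := (cdf ν).mono.measurable
  have hGint : Integrable (fun x => cdf ν x) μ := by
    refine (integrable_const (1:ℝ)).mono' hGmeas.aestronglyMeasurable ?_
    filter_upwards with x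
    rw [Real.norm_eq_abs, abs_of_nonneg (cdf_nonneg ν x)]
    exact cdf_le_one ν x
  -- transfer of the integral of G through the quantile map
  have hint_eq : ∫ u in Ioo (0:ℝ) 1, cdf ν (Finv u) = ∫ x, cdf ν x ∂μ := by
    rw [← hmap, integral_map hFmeas hGmeas.aestronglyMeasurable]
  have hfint : IntegrableOn (fun u => cdf ν (Finv u)) (Ioo (0:ℝ) 1) volume := by
    have h := (integrable_map_measure hGmeas.aestronglyMeasurable hFmeas).mp
      (by rw [hmap]; exact hGint)
    exact h
  -- integrability on the pieces
  have hintA : IntegrableOn (fun u => cdf ν (Finv u)) (Ioc (0:ℝ) (1/2)) volume :=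
    hfint.mono_set (fun x hx => ⟨hx.1, lt_of_le_of_lt hx.2 h12⟩)
  have hintB : IntegrableOn (fun u => cdf ν (Finv u)) (Ioc (1/2:ℝ) 1) volume := by
    rw [integrableOn_Ioc_iff_integrableOn_Ioo]
    exact hfint.mono_set (fun x hx => ⟨lt_trans (by norm_num) hx.1, hx.2⟩)
  have hII1 : IntervalIntegrable (fun u => cdf ν (Finv u)) volume 0 (1/2) :=
    (intervalIntegrable_iff_integrableOn_Ioc_of_le (by norm_num)).mpr hintA
  have hII2 : IntervalIntegrable (fun u => cdf ν (Finv u)) volume (1/2) 1 :=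
    (intervalIntegrable_iff_integrableOn_Ioc_of_le (by norm_num)).mpr hintB
  -- split the unit interval integral
  have htotal : ∫ u in Ioo (0:ℝ) 1, cdf ν (Finv u)
      = (∫ u in Ioo (0:ℝ) (1/2), cdf ν (Finv u)) + ∫ u in Ioo (1/2:ℝ) 1, cdf ν (Finv u) := by
    rw [← integral_Ioc_eq_integral_Ioo, ← intervalIntegral.integral_of_le zero_le_one,
      ← intervalIntegral.integral_add_adjacent_intervals hII1 hII2,
      intervalIntegral.integral_of_le (by norm_num : (0:ℝ) ≤ 1/2),
      intervalIntegral.integral_of_le (by norm_num : (1/2:ℝ) ≤ 1),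
      integral_Ioc_eq_integral_Ioo, integral_Ioc_eq_integral_Ioo]
  -- change of variables for the two halves
  have hA2 : (∫ α in Ioo (0:ℝ) 1, cdf ν (Finv (α/2)))
      = 2 * ∫ u in Ioo (0:ℝ) (1/2), cdf ν (Finv u) := aux_scaleA (fun u => cdf ν (Finv u))
  have hB2 : (∫ α in Ioo (0:ℝ) 1, cdf ν (Finv (1 - α/2)))
      = 2 * ∫ u in Ioo (1/2:ℝ) 1, cdf ν (Finv u) := aux_scaleB (fun u => cdf ν (Finv u))
  have hshift : (∫ u in Ioo (0:ℝ) (1/2), cdf ν (Finv (u + 1/2)))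
      = ∫ u in Ioo (1/2:ℝ) 1, cdf ν (Finv u) := aux_shift (fun u => cdf ν (Finv u))
  -- A ≤ B
  have hABle : (∫ u in Ioo (0:ℝ) (1/2), cdf ν (Finv u))
      ≤ ∫ u in Ioo (1/2:ℝ) 1, cdf ν (Finv u) := by
    rw [← hshift]
    refine setIntegral_mono_on (hfint.mono_set (fun x hx => ⟨hx.1, hx.2.trans h12⟩)) ?_
      measurableSet_Ioo ?_
    · have hshiftInt := hII2.comp_add_right (1/2)
      rw [show (1:ℝ)/2 - 1/2 = 0 by norm_num, show (1:ℝ) - 1/2 = 1/2 by norm_num] at hshiftInt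
      exact ((intervalIntegrable_iff_integrableOn_Ioc_of_le (by norm_num)).mp
        hshiftInt).mono_set Ioo_subset_Ioc_self
    · intro u hu
      exact hfmono u ⟨hu.1, hu.2.trans h12⟩ (u + 1/2)
        ⟨by linarith [hu.1], by linarith [hu.2]⟩ (by linarith)
  -- B ≤ 1/2
  have hBle : (∫ u in Ioo (1/2:ℝ) 1, cdf ν (Finv u)) ≤ 1/2 := by
    have hle : (∫ u in Ioo (1/2:ℝ) 1, cdf ν (Finv u)) ≤ ∫ _u in Ioo (1/2:ℝ) 1, (1:ℝ) := by
      refine setIntegral_mono_on (hintB.mono_set Ioo_subset_Ioc_self) ?_ measurableSet_Ioo ?_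
      · exact (integrableOn_const_iff).mpr (Or.inr (by rw [Real.volume_Ioo]; exact ENNReal.ofReal_lt_top))
      · intro u _
        exact cdf_le_one ν _
    have hconst : (∫ _u in Ioo (1/2:ℝ) 1, (1:ℝ)) = 1/2 := by
      rw [setIntegral_const, Real.volume_real_Ioo, smul_eq_mul, mul_one]
      norm_num
    linarith
  -- Fubini: P(X ≥ Y) = ∫ G dμ
  have hS : MeasurableSet {p : ℝ × ℝ | p.2 ≤ p.1} :=
    measurableSet_le measurable_snd measurable_fst
  have hT1 : ((μ.prod ν) {p : ℝ × ℝ | p.1 < p.2}).toReal = 1 - ∫ x, cdf ν x ∂μ := by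
    have hcompl : {p : ℝ × ℝ | p.1 < p.2} = {p : ℝ × ℝ | p.2 ≤ p.1}ᶜ := by
      ext p; simp [not_le]
    rw [hcompl, prob_compl_eq_one_sub hS,
      ENNReal.toReal_sub_of_le prob_le_one ENNReal.one_ne_top, ENNReal.toReal_one,
      aux_prod_ge μ ν]
  have hT2 : 0 ≤ ((μ.prod ν) {p : ℝ × ℝ | p.1 = p.2}).toReal := ENNReal.toReal_nonneg
  constructor
  · rw [hI2, hA2, hB2]
    linarith
  · rw [hI2, hA2, hB2, hθ, hT1]
    have h := hint_eq
    rw [htotal] at h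
    linarith
end

section
/- For any two distribution functions F and G, the sum of the two overlap indices satisfies I₁ + I₂ ∈ [0, 1], where I₂ is the overlap index of G with respect to F and I₁ is obtained by interchanging the roles of F and G. -/
open MeasureTheory ProbabilityTheory Set Filter Topology

noncomputable def qtl (μ : Measure ℝ) (t : ℝ) : ℝ := sInf {x | t ≤ cdf μ x}

section QtlBasic

variable {μ : Measure ℝ} [IsProbabilityMeasure μ] {t x : ℝ}

lemma qtl_nonempty (ht1 : t < 1) : {x | t ≤ cdf μ x}.Nonempty :=
  ((tendsto_cdf_atTop μ).eventually_const_le ht1).exists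

lemma qtl_bddBelow (ht0 : 0 < t) : BddBelow {x | t ≤ cdf μ x} := by
  obtain ⟨x₀, hx₀⟩ := eventually_atBot.mp ((tendsto_cdf_atBot μ).eventually_lt_const ht0)
  exact ⟨x₀, fun y hy => le_of_not_gt fun hlt => absurd hy (not_le.mpr (hx₀ y hlt.le))⟩

lemma qtl_mem (hF : Continuous (cdf μ)) (ht0 : 0 < t) (ht1 : t < 1) :
    t ≤ cdf μ (qtl μ t) :=
  IsClosed.csInf_mem (isClosed_le continuous_const hF) (qtl_nonempty ht1) (qtl_bddBelow ht0)

lemma qtl_le_iff (hF : Continuous (cdf μ)) (ht0 : 0 < t) (ht1 : t < 1) :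
    qtl μ t ≤ x ↔ t ≤ cdf μ x := by
  constructor
  · exact fun h => le_trans (qtl_mem hF ht0 ht1) (monotone_cdf μ h)
  · exact fun h => csInf_le (qtl_bddBelow ht0) h

lemma cdf_qtl (hF : Continuous (cdf μ)) (ht0 : 0 < t) (ht1 : t < 1) :
    cdf μ (qtl μ t) = t := by
  refine le_antisymm ?_ (qtl_mem hF ht0 ht1)
  by_contra hlt
  push_neg at hlt
  have h1 : ∀ᶠ y in 𝓝[<] (qtl μ t), t ≤ cdf μ y := by
    have h2 : ∀ᶠ y in 𝓝 (qtl μ t), t < cdf μ y :=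
      (hF.continuousAt (x := qtl μ t)).eventually_const_lt hlt
    exact (h2.filter_mono nhdsWithin_le_nhds).mono fun y hy => hy.le
  obtain ⟨y, hy, hylt⟩ := (h1.and self_mem_nhdsWithin).exists
  exact absurd (csInf_le (qtl_bddBelow ht0) hy) (not_le.mpr hylt)

lemma qtl_monotoneOn : MonotoneOn (qtl μ) (Ioo 0 1) := fun _ hs _ ht hst =>
  csInf_le_csInf (qtl_bddBelow hs.1) (qtl_nonempty ht.2) (fun _ hx => le_trans hst hx)

end QtlBasic

lemma vol_Ioo_inter_Iic (a b c : ℝ) :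
    volume (Ioo a b ∩ Iic c) = ENNReal.ofReal (min c b - a) := by
  rcases le_or_gt b c with hbc | hcb
  · have hsub : Ioo a b ⊆ Iic c := fun x hx => le_trans (le_of_lt hx.2) hbc
    rw [inter_eq_left.mpr hsub, Real.volume_Ioo, min_eq_right hbc]
  · have : Ioo a b ∩ Iic c = Ioc a c := by
      ext x
      simp only [mem_inter_iff, mem_Ioo, mem_Iic, mem_Ioc]
      exact ⟨fun h => ⟨h.1.1, h.2⟩, fun h => ⟨⟨h.1, lt_of_le_of_lt h.2 hcb⟩, h.2⟩⟩
    rw [this, Real.volume_Ioc, min_eq_left hcb.le]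

lemma ite_le_eq_indicator (c : ℝ) :
    (fun s => if s ≤ c then (1:ℝ) else 0) = (Iic c).indicator (fun _ => (1:ℝ)) := by
  ext s; simp [indicator_apply, mem_Iic]

lemma measurable_ite_le (c : ℝ) : Measurable (fun s => if s ≤ c then (1:ℝ) else 0) := by
  rw [ite_le_eq_indicator]
  exact measurable_const.indicator measurableSet_Iic

lemma integral_ite_le {A : Set ℝ} (c : ℝ) :
    (∫ s in A, if s ≤ c then (1:ℝ) else 0) = (volume (A ∩ Iic c)).toReal := by
  rw [ite_le_eq_indicator c, setIntegral_indicator measurableSet_Iic, setIntegral_const]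
  simp
  rfl

lemma finrestr {A : Set ℝ} (hfin : volume A ≠ ⊤) : IsFiniteMeasure (volume.restrict A) :=
  ⟨by rwa [Measure.restrict_apply_univ, lt_top_iff_ne_top]⟩

lemma integrableOn_bdd {A : Set ℝ} (hfin : volume A ≠ ⊤) {f : ℝ → ℝ}
    (hm : AEMeasurable f (volume.restrict A)) {C : ℝ} (hb : ∀ x, |f x| ≤ C) :
    IntegrableOn f A := by
  haveI := finrestr hfin
  exact ⟨hm.aestronglyMeasurable,
    HasFiniteIntegral.of_bounded (C := C) (ae_of_all _ (fun x => by simpa using hb x))⟩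

section Core

variable {A : Set ℝ} {h k : ℝ → ℝ}

lemma unc_integrable (hfin : volume A ≠ ⊤)
    (hk : AEMeasurable k (volume.restrict A)) :
    Integrable (Function.uncurry fun s t => if s ≤ k t then (1:ℝ) else 0)
      ((volume.restrict A).prod (volume.restrict A)) := by
  haveI := finrestr hfin
  have hmk : AEMeasurable (fun p : ℝ × ℝ => (p.1, k p.2))
      ((volume.restrict A).prod (volume.restrict A)) :=
    (measurable_fst.aemeasurable).prodMk
      (hk.comp_quasiMeasurePreserving Measure.quasiMeasurePreserving_snd)
  have hg : Measurable (fun q : ℝ × ℝ => if q.1 ≤ q.2 then (1:ℝ) else 0) :=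
    Measurable.ite (measurableSet_le measurable_fst measurable_snd)
      measurable_const measurable_const
  refine ⟨(hg.comp_aemeasurable hmk).aestronglyMeasurable, ?_⟩
  refine HasFiniteIntegral.of_bounded (C := 1) (ae_of_all _ (fun p => ?_))
  simp only [Function.uncurry]
  split <;> simp

lemma swap_eq (hfin : volume A ≠ ⊤)
    (hk : AEMeasurable k (volume.restrict A)) :
    (∫ t in A, (volume (A ∩ Iic (k t))).toReal)
      = ∫ s in A, (∫ t in A, if s ≤ k t then (1:ℝ) else 0) :=
  calc (∫ t in A, (volume (A ∩ Iic (k t))).toReal)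
      = ∫ t in A, (∫ s in A, if s ≤ k t then (1:ℝ) else 0) :=
        integral_congr_ae (ae_of_all _ fun t => (integral_ite_le (k t)).symm)
    _ = ∫ s in A, (∫ t in A, if s ≤ k t then (1:ℝ) else 0) :=
        (integral_integral_swap (unc_integrable hfin hk)).symm

lemma marg_integrable (hfin : volume A ≠ ⊤)
    (hk : AEMeasurable k (volume.restrict A)) :
    Integrable (fun s => ∫ t in A, if s ≤ k t then (1:ℝ) else 0) (volume.restrict A) :=
  (unc_integrable hfin hk).integral_prod_left

lemma mA_measurable : Measurable (fun c => (volume (A ∩ Iic c)).toReal) := by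
  have : Monotone (fun c => volume (A ∩ Iic c)) :=
    fun c c' hcc => measure_mono (inter_subset_inter_right _ (Iic_subset_Iic.mpr hcc))
  exact ENNReal.measurable_toReal.comp this.measurable

lemma mA_integrable (hfin : volume A ≠ ⊤) (hh : AEMeasurable h (volume.restrict A)) :
    IntegrableOn (fun s => (volume (A ∩ Iic (h s))).toReal) A := by
  refine integrableOn_bdd hfin (mA_measurable.comp_aemeasurable hh)
    (C := (volume A).toReal) (fun x => ?_)
  rw [abs_of_nonneg ENNReal.toReal_nonneg]
  exact ENNReal.toReal_mono hfin (measure_mono inter_subset_left)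

lemma ite_integrableOn (hfin : volume A ≠ ⊤) (s : ℝ)
    (hk : AEMeasurable k (volume.restrict A)) :
    IntegrableOn (fun t => if s ≤ k t then (1:ℝ) else 0) A := by
  have hg : Measurable (fun y : ℝ => if s ≤ y then (1:ℝ) else 0) :=
    Measurable.ite (measurableSet_le measurable_const measurable_id)
      measurable_const measurable_const
  refine integrableOn_bdd hfin (hg.comp_aemeasurable hk) (C := 1) (fun x => ?_)
  split <;> simp

lemma one_sub_ite_integrableOn (hfin : volume A ≠ ⊤) (c : ℝ) :
    IntegrableOn (fun t => (1:ℝ) - if t ≤ c then (1:ℝ) else 0) A := by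
  haveI := finrestr hfin
  exact (integrable_const 1).sub (integrableOn_bdd hfin
    (measurable_ite_le c).aemeasurable (C := 1) (fun x => by split <;> simp))

lemma inner_sub_eval (hfin : volume A ≠ ⊤) (c : ℝ) :
    (∫ t in A, ((1:ℝ) - if t ≤ c then (1:ℝ) else 0))
      = (volume A).toReal - (volume (A ∩ Iic c)).toReal := by
  haveI := finrestr hfin
  rw [integral_sub (integrable_const 1)
    (integrableOn_bdd hfin (measurable_ite_le c).aemeasurable (C := 1)
      (fun x => by split <;> simp)),
    setIntegral_const, integral_ite_le]
  simp
  rfl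

lemma core_low (hA : MeasurableSet A) (hfin : volume A ≠ ⊤)
    (hh : AEMeasurable h (volume.restrict A)) (hk : AEMeasurable k (volume.restrict A))
    (tot : ∀ s ∈ A, ∀ t ∈ A, t ≤ h s ∨ s ≤ k t) :
    (volume A).toReal * (volume A).toReal
      ≤ (∫ t in A, (volume (A ∩ Iic (k t))).toReal)
        + ∫ s in A, (volume (A ∩ Iic (h s))).toReal := by
  haveI := finrestr hfin
  rw [swap_eq hfin hk]
  have key : ∀ s ∈ A, (volume A).toReal - (volume (A ∩ Iic (h s))).toReal
      ≤ ∫ t in A, if s ≤ k t then (1:ℝ) else 0 := by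
    intro s hs
    rw [← inner_sub_eval hfin (h s)]
    refine setIntegral_mono_on (one_sub_ite_integrableOn hfin (h s))
      (ite_integrableOn hfin s hk) hA (fun t ht => ?_)
    rcases tot s hs t ht with hc | hc
    · simp only [hc, if_true]; split <;> norm_num
    · simp only [hc, if_true]; split <;> norm_num
  have step : ∫ s in A, ((volume A).toReal - (volume (A ∩ Iic (h s))).toReal)
      ≤ ∫ s in A, (∫ t in A, if s ≤ k t then (1:ℝ) else 0) :=
    setIntegral_mono_on ((integrable_const _).sub (mA_integrable hfin hh))
      (marg_integrable hfin hk) hA key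
  rw [integral_sub (integrable_const _) (mA_integrable hfin hh), setIntegral_const,
    smul_eq_mul, mul_comm, measureReal_def] at step
  linarith

lemma core_high (hA : MeasurableSet A) (hfin : volume A ≠ ⊤)
    (hh : AEMeasurable h (volume.restrict A)) (hk : AEMeasurable k (volume.restrict A))
    (hnull : ∀ s ∈ A, volume {t | t ∈ A ∧ t ≤ h s ∧ s ≤ k t} = 0) :
    (∫ t in A, (volume (A ∩ Iic (k t))).toReal)
      + (∫ s in A, (volume (A ∩ Iic (h s))).toReal)
      ≤ (volume A).toReal * (volume A).toReal := by
  haveI := finrestr hfin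
  rw [swap_eq hfin hk]
  have key : ∀ s ∈ A, (∫ t in A, if s ≤ k t then (1:ℝ) else 0)
      ≤ (volume A).toReal - (volume (A ∩ Iic (h s))).toReal := by
    intro s hs
    rw [← inner_sub_eval hfin (h s)]
    have h0 : (volume.restrict A) {t | ¬¬(t ≤ h s ∧ s ≤ k t)} = 0 := by
      rw [Measure.restrict_apply' hA]
      refine measure_mono_null (fun t ht => ?_) (hnull s hs)
      exact ⟨ht.2, not_not.mp ht.1⟩
    have hae : ∀ᵐ t ∂(volume.restrict A), ¬(t ≤ h s ∧ s ≤ k t) := by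
      rw [ae_iff]; exact h0
    refine integral_mono_ae (ite_integrableOn hfin s hk)
      (one_sub_ite_integrableOn hfin (h s)) (hae.mono (fun t ht => ?_))
    by_cases h1 : t ≤ h s
    · have h2 : ¬ s ≤ k t := fun h2 => ht ⟨h1, h2⟩
      simp only [h1, h2, if_true, if_false]; norm_num
    · simp only [h1, if_false]; split <;> norm_num
  have step : ∫ s in A, (∫ t in A, if s ≤ k t then (1:ℝ) else 0)
      ≤ ∫ s in A, ((volume A).toReal - (volume (A ∩ Iic (h s))).toReal) :=
    setIntegral_mono_on (marg_integrable hfin hk)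
      ((integrable_const _).sub (mA_integrable hfin hh)) hA key
  rw [integral_sub (integrable_const _) (mA_integrable hfin hh), setIntegral_const,
    smul_eq_mul, mul_comm, measureReal_def] at step
  linarith

end Core

lemma setIoo_eq_intervalIntegral (f : ℝ → ℝ) {a b : ℝ} (hab : a ≤ b) :
    ∫ t in Ioo a b, f t = ∫ t in a..b, f t := by
  rw [intervalIntegral.integral_of_le hab, integral_Ioc_eq_integral_Ioo]

lemma conv_half (k : ℝ → ℝ) :
    ∫ α in Ioo (0:ℝ) 1, k (α/2) = 2 * ∫ t in Ioo (0:ℝ) (1/2), k t := by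
  rw [setIoo_eq_intervalIntegral _ (by norm_num), setIoo_eq_intervalIntegral _ (by norm_num),
    intervalIntegral.integral_comp_div k (show (2:ℝ) ≠ 0 by norm_num)]
  norm_num

lemma conv_one_sub_half (k : ℝ → ℝ) :
    ∫ α in Ioo (0:ℝ) 1, k (1 - α/2) = 2 * ∫ t in Ioo (1/2:ℝ) 1, k t := by
  rw [setIoo_eq_intervalIntegral _ (by norm_num), setIoo_eq_intervalIntegral _ (by norm_num),
    intervalIntegral.integral_comp_div (fun x => k (1 - x)) (show (2:ℝ) ≠ 0 by norm_num),
    intervalIntegral.integral_comp_sub_left k 1]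
  norm_num

lemma shift_mono (k : ℝ → ℝ) (hmk : MonotoneOn k (Ioo (0:ℝ) 1)) (hb : ∀ x, |k x| ≤ 1) :
    ∫ t in Ioo (0:ℝ) (1/2), k t ≤ ∫ t in Ioo (1/2:ℝ) 1, k t := by
  have hfinI : volume (Ioo (0:ℝ) (1/2)) ≠ ⊤ := by simp [Real.volume_Ioo]
  have hIsub : Ioo (0:ℝ) (1/2) ⊆ Ioo 0 1 := Ioo_subset_Ioo le_rfl (by norm_num)
  have h1 : ∫ t in Ioo (0:ℝ) (1/2), k t ≤ ∫ t in Ioo (0:ℝ) (1/2), k (t + 1/2) := by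
    refine setIntegral_mono_on
      (integrableOn_bdd hfinI (aemeasurable_restrict_of_monotoneOn measurableSet_Ioo
        (hmk.mono hIsub)) hb)
      (integrableOn_bdd hfinI (aemeasurable_restrict_of_monotoneOn measurableSet_Ioo
        (fun a ha b hb' hab => hmk ⟨by linarith [ha.1], by linarith [ha.2]⟩
          ⟨by linarith [hb'.1], by linarith [hb'.2]⟩ (by linarith)))
        (fun x => hb _))
      measurableSet_Ioo (fun t ht => ?_)
    exact hmk (hIsub ht) ⟨by linarith [ht.1], by linarith [ht.2]⟩ (by linarith)
  have h2 : ∫ t in Ioo (0:ℝ) (1/2), k (t + 1/2) = ∫ t in Ioo (1/2:ℝ) 1, k t := by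
    rw [setIoo_eq_intervalIntegral _ (by norm_num), setIoo_eq_intervalIntegral _ (by norm_num),
      intervalIntegral.integral_comp_add_right k (1/2)]
    norm_num
  linarith

/-- For continuous distribution functions F (of μ) and G (of ν), the sum of the overlap indices
I₁ + I₂ lies in [0, 1], where
I₂ = ∫₀¹ G(F⁻¹(1−α/2)) dα − ∫₀¹ G(F⁻¹(α/2)) dα and I₁ is obtained by swapping F and G. -/
theorem overlap_indices_sum_mem_unit_interval
    (μ ν : Measure ℝ) [IsProbabilityMeasure μ] [IsProbabilityMeasure ν]
    (hF : Continuous (cdf μ)) (hG : Continuous (cdf ν))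
    (I1 I2 : ℝ)
    (hI2 : I2 = (∫ α in Ioo (0:ℝ) 1, cdf ν (sInf {x : ℝ | 1 - α/2 ≤ cdf μ x}))
              - ∫ α in Ioo (0:ℝ) 1, cdf ν (sInf {x : ℝ | α/2 ≤ cdf μ x}))
    (hI1 : I1 = (∫ α in Ioo (0:ℝ) 1, cdf μ (sInf {x : ℝ | 1 - α/2 ≤ cdf ν x}))
              - ∫ α in Ioo (0:ℝ) 1, cdf μ (sInf {x : ℝ | α/2 ≤ cdf ν x})) :
    I1 + I2 ∈ Icc (0:ℝ) 1 := by
  classical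
  -- the two composed functions
  set h : ℝ → ℝ := fun t => cdf μ (qtl ν t) with hh_def
  set k : ℝ → ℝ := fun t => cdf ν (qtl μ t) with hk_def
  have hkmono : MonotoneOn k (Ioo (0:ℝ) 1) :=
    fun a ha b hb hab => monotone_cdf ν (qtl_monotoneOn ha hb hab)
  have hhmono : MonotoneOn h (Ioo (0:ℝ) 1) :=
    fun a ha b hb hab => monotone_cdf μ (qtl_monotoneOn ha hb hab)
  have hkb : ∀ x, |k x| ≤ 1 := fun x => abs_le.mpr
    ⟨by have := cdf_nonneg ν (qtl μ x); linarith, cdf_le_one ν _⟩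
  have hhb : ∀ x, |h x| ≤ 1 := fun x => abs_le.mpr
    ⟨by have := cdf_nonneg μ (qtl ν x); linarith, cdf_le_one μ _⟩
  have hIsub : Ioo (0:ℝ) (1/2) ⊆ Ioo 0 1 := Ioo_subset_Ioo le_rfl (by norm_num)
  have hJsub : Ioo (1/2:ℝ) 1 ⊆ Ioo 0 1 := Ioo_subset_Ioo (by norm_num) le_rfl
  have hfinI : volume (Ioo (0:ℝ) (1/2)) ≠ ⊤ := by simp [Real.volume_Ioo]
  have hfinJ : volume (Ioo (1/2:ℝ) 1) ≠ ⊤ := by simp [Real.volume_Ioo]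
  have hvolI : (volume (Ioo (0:ℝ) (1/2))).toReal = 1/2 := by
    rw [Real.volume_Ioo]; norm_num
  have hvolJ : (volume (Ioo (1/2:ℝ) 1)).toReal = 1/2 := by
    rw [Real.volume_Ioo]; norm_num
  -- measurability
  have hkI : AEMeasurable k (volume.restrict (Ioo (0:ℝ) (1/2))) :=
    aemeasurable_restrict_of_monotoneOn measurableSet_Ioo (hkmono.mono hIsub)
  have hkJ : AEMeasurable k (volume.restrict (Ioo (1/2:ℝ) 1)) :=
    aemeasurable_restrict_of_monotoneOn measurableSet_Ioo (hkmono.mono hJsub)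
  have hhI : AEMeasurable h (volume.restrict (Ioo (0:ℝ) (1/2))) :=
    aemeasurable_restrict_of_monotoneOn measurableSet_Ioo (hhmono.mono hIsub)
  have hhJ : AEMeasurable h (volume.restrict (Ioo (1/2:ℝ) 1)) :=
    aemeasurable_restrict_of_monotoneOn measurableSet_Ioo (hhmono.mono hJsub)
  -- totality
  have tot : ∀ s ∈ Ioo (0:ℝ) (1/2), ∀ t ∈ Ioo (0:ℝ) (1/2), t ≤ h s ∨ s ≤ k t := by
    intro s hs t ht
    have hs' := hIsub hs
    have ht' := hIsub ht
    rcases le_total (qtl μ t) (qtl ν s) with hc | hc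
    · exact Or.inl ((qtl_le_iff hF ht'.1 ht'.2).mp hc)
    · exact Or.inr ((qtl_le_iff hG hs'.1 hs'.2).mp hc)
  -- ties are null
  have hnull : ∀ s ∈ Ioo (1/2:ℝ) 1,
      volume {t | t ∈ Ioo (1/2:ℝ) 1 ∧ t ≤ h s ∧ s ≤ k t} = 0 := by
    intro s hs
    have hs' := hJsub hs
    refine measure_mono_null (fun t ht => ?_) (measure_singleton (cdf μ (qtl ν s)))
    obtain ⟨htJ, h1, h2⟩ := ht
    have ht' := hJsub htJ
    have e1 : qtl μ t ≤ qtl ν s := (qtl_le_iff hF ht'.1 ht'.2).mpr h1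
    have e2 : qtl ν s ≤ qtl μ t := (qtl_le_iff hG hs'.1 hs'.2).mpr h2
    have heq : qtl μ t = qtl ν s := le_antisymm e1 e2
    have hct : cdf μ (qtl μ t) = t := cdf_qtl hF ht'.1 ht'.2
    simp only [mem_singleton_iff]
    rw [← hct, heq]
  -- lower bound on I
  have low := core_low measurableSet_Ioo hfinI hhI hkI tot
  rw [hvolI] at low
  have hmIle : ∀ c : ℝ, 0 ≤ c → (volume (Ioo (0:ℝ) (1/2) ∩ Iic c)).toReal ≤ c := by
    intro c hc
    rw [vol_Ioo_inter_Iic, sub_zero, ENNReal.toReal_ofReal']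
    exact max_le (min_le_left _ _) hc
  have lowk : (∫ t in Ioo (0:ℝ) (1/2), (volume (Ioo (0:ℝ) (1/2) ∩ Iic (k t))).toReal)
      ≤ ∫ t in Ioo (0:ℝ) (1/2), k t :=
    setIntegral_mono_on (mA_integrable hfinI hkI) (integrableOn_bdd hfinI hkI hkb)
      measurableSet_Ioo (fun t _ => hmIle _ (cdf_nonneg ν _))
  have lowh : (∫ t in Ioo (0:ℝ) (1/2), (volume (Ioo (0:ℝ) (1/2) ∩ Iic (h t))).toReal)
      ≤ ∫ t in Ioo (0:ℝ) (1/2), h t :=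
    setIntegral_mono_on (mA_integrable hfinI hhI) (integrableOn_bdd hfinI hhI hhb)
      measurableSet_Ioo (fun t _ => hmIle _ (cdf_nonneg μ _))
  -- upper bound on J
  have high := core_high measurableSet_Ioo hfinJ hhJ hkJ hnull
  rw [hvolJ] at high
  have hmJge : ∀ c : ℝ, c ≤ 1 → c ≤ 1/2 + (volume (Ioo (1/2:ℝ) 1 ∩ Iic c)).toReal := by
    intro c hc
    rw [vol_Ioo_inter_Iic, ENNReal.toReal_ofReal']
    rcases le_total c (1/2) with hch | hch
    · have : (0:ℝ) ≤ max (min c 1 - 1/2) 0 := le_max_right _ _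
      linarith
    · have : c - 1/2 ≤ max (min c 1 - 1/2) 0 := le_max_of_le_left (by rw [min_eq_left hc])
      linarith
  haveI := finrestr hfinJ
  have highk : (∫ t in Ioo (1/2:ℝ) 1, k t)
      ≤ 1/4 + ∫ t in Ioo (1/2:ℝ) 1, (volume (Ioo (1/2:ℝ) 1 ∩ Iic (k t))).toReal := by
    have step : (∫ t in Ioo (1/2:ℝ) 1, k t) ≤ ∫ t in Ioo (1/2:ℝ) 1,
        (1/2 + (volume (Ioo (1/2:ℝ) 1 ∩ Iic (k t))).toReal) :=
      setIntegral_mono_on (integrableOn_bdd hfinJ hkJ hkb)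
        ((integrable_const _).add (mA_integrable hfinJ hkJ))
        measurableSet_Ioo (fun t _ => hmJge _ (cdf_le_one ν _))
    rw [integral_add (integrable_const _) (mA_integrable hfinJ hkJ), setIntegral_const,
      measureReal_def, hvolJ, smul_eq_mul] at step
    linarith
  have highh : (∫ t in Ioo (1/2:ℝ) 1, h t)
      ≤ 1/4 + ∫ t in Ioo (1/2:ℝ) 1, (volume (Ioo (1/2:ℝ) 1 ∩ Iic (h t))).toReal := by
    have step : (∫ t in Ioo (1/2:ℝ) 1, h t) ≤ ∫ t in Ioo (1/2:ℝ) 1,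
        (1/2 + (volume (Ioo (1/2:ℝ) 1 ∩ Iic (h t))).toReal) :=
      setIntegral_mono_on (integrableOn_bdd hfinJ hhJ hhb)
        ((integrable_const _).add (mA_integrable hfinJ hhJ))
        measurableSet_Ioo (fun t _ => hmJge _ (cdf_le_one μ _))
    rw [integral_add (integrable_const _) (mA_integrable hfinJ hhJ), setIntegral_const,
      measureReal_def, hvolJ, smul_eq_mul] at step
    linarith
  -- monotone shift
  have shk := shift_mono k hkmono hkb
  have shh := shift_mono h hhmono hhb
  -- rewrite the hypotheses
  have e1 : (∫ α in Ioo (0:ℝ) 1, cdf ν (sInf {x : ℝ | α/2 ≤ cdf μ x}))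
      = ∫ α in Ioo (0:ℝ) 1, k (α/2) := rfl
  have e2 : (∫ α in Ioo (0:ℝ) 1, cdf ν (sInf {x : ℝ | 1 - α/2 ≤ cdf μ x}))
      = ∫ α in Ioo (0:ℝ) 1, k (1 - α/2) := rfl
  have e3 : (∫ α in Ioo (0:ℝ) 1, cdf μ (sInf {x : ℝ | α/2 ≤ cdf ν x}))
      = ∫ α in Ioo (0:ℝ) 1, h (α/2) := rfl
  have e4 : (∫ α in Ioo (0:ℝ) 1, cdf μ (sInf {x : ℝ | 1 - α/2 ≤ cdf ν x}))
      = ∫ α in Ioo (0:ℝ) 1, h (1 - α/2) := rfl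
  rw [e1, e2, conv_half k, conv_one_sub_half k] at hI2
  rw [e3, e4, conv_half h, conv_one_sub_half h] at hI1
  constructor
  · rw [hI1, hI2]; linarith
  · rw [hI1, hI2]; linarith
end

section
/- If the absolutely continuous distribution functions F and G have equal medians, then I₁ + I₂ = 1. -/
open MeasureTheory ProbabilityTheory Set

lemma aux_integral_cdf (μ ν : Measure ℝ) [IsProbabilityMeasure μ] [IsProbabilityMeasure ν]
    {s : Set ℝ} (hs : MeasurableSet s) :
    ∫ x in s, cdf ν x ∂μ = ((μ.prod ν) {p : ℝ × ℝ | p.1 ∈ s ∧ p.2 ≤ p.1}).toReal := by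
  have hT : MeasurableSet {p : ℝ × ℝ | p.1 ∈ s ∧ p.2 ≤ p.1} :=
    (measurable_fst hs).inter (measurableSet_le measurable_snd measurable_fst)
  have hmeas : Measurable fun x : ℝ => ν (Iic x) := by
    have h : (fun x : ℝ => ν (Iic x)) = fun x => ENNReal.ofReal (cdf ν x) :=
      funext fun x => (ofReal_cdf ν x).symm
    rw [h]
    exact ((cdf ν).mono.measurable).ennreal_ofReal
  have h1 : ∫ x in s, cdf ν x ∂μ = (∫⁻ x in s, ν (Iic x) ∂μ).toReal := by
    have : ∀ x, cdf ν x = (ν (Iic x)).toReal := fun x => (cdf_eq_real ν x).trans (measureReal_def _ _)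
    simp_rw [this]
    rw [integral_toReal (hmeas.aemeasurable.restrict)]
    exact ae_of_all _ fun x => measure_lt_top ν _
  rw [h1, Measure.prod_apply hT]
  congr 1
  calc ∫⁻ x in s, ν (Iic x) ∂μ
      = ∫⁻ x, s.indicator (fun x => ν (Iic x)) x ∂μ := (lintegral_indicator hs _).symm
    _ = ∫⁻ x, ν (Prod.mk x ⁻¹' {p : ℝ × ℝ | p.1 ∈ s ∧ p.2 ≤ p.1}) ∂μ := by
        refine lintegral_congr fun x => ?_
        by_cases hx : x ∈ s
        · have hpre : Prod.mk x ⁻¹' {p : ℝ × ℝ | p.1 ∈ s ∧ p.2 ≤ p.1} = Iic x := by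
            ext y; simp [hx]
          rw [Set.indicator_of_mem hx, hpre]
        · have hpre : Prod.mk x ⁻¹' {p : ℝ × ℝ | p.1 ∈ s ∧ p.2 ≤ p.1} = ∅ := by
            ext y; simp [hx]
          rw [Set.indicator_of_notMem hx, hpre, measure_empty]

lemma aux_cdf_median (μ : Measure ℝ) [IsProbabilityMeasure μ] [NullSingletonClass μ]
    {q : ℝ} (hq : q = sInf {x : ℝ | (1:ℝ)/2 ≤ cdf μ x}) : cdf μ q = 1/2 := by
  set S := {x : ℝ | (1:ℝ)/2 ≤ cdf μ x} with hS
  have hne : S.Nonempty := by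
    have h : ∀ᶠ x in Filter.atTop, (1:ℝ)/2 < cdf μ x :=
      (tendsto_cdf_atTop μ).eventually (eventually_gt_nhds (by norm_num))
    obtain ⟨x, hx⟩ := h.exists
    exact ⟨x, hx.le⟩
  have hbdd : BddBelow S := by
    have h : ∀ᶠ x in Filter.atBot, cdf μ x < 1/2 :=
      (tendsto_cdf_atBot μ).eventually (eventually_lt_nhds (by norm_num))
    obtain ⟨x₀, hx₀⟩ := Filter.eventually_atBot.mp h
    refine ⟨x₀, fun y hy => ?_⟩
    by_contra hlt
    exact absurd hy (not_le.mpr (hx₀ y (le_of_lt (not_le.mp hlt))))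
  have hge : (1:ℝ)/2 ≤ cdf μ q := by
    have ht : Filter.Tendsto (cdf μ) (nhdsWithin q (Ioi q)) (nhds (cdf μ q)) :=
      ((cdf μ).right_continuous q).mono_left (nhdsWithin_mono q Ioi_subset_Ici_self)
    refine ge_of_tendsto ht ?_
    filter_upwards [self_mem_nhdsWithin] with x hx
    obtain ⟨sx, hsx, hlt⟩ := exists_lt_of_csInf_lt hne (hq ▸ hx)
    exact le_trans hsx (monotone_cdf μ hlt.le)
  have hL : Function.leftLim (cdf μ) q = cdf μ q := by
    have h1 : μ {q} = 0 := measure_singleton q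
    have h2 := (cdf μ).measure_singleton q
    rw [measure_cdf, h1] at h2
    have h3 : cdf μ q - Function.leftLim (cdf μ) q ≤ 0 := by
      have h2' := h2.symm
      rw [ENNReal.ofReal_eq_zero] at h2'
      exact h2'
    have h4 : Function.leftLim (cdf μ) q ≤ cdf μ q := (monotone_cdf μ).leftLim_le le_rfl
    linarith
  have hle : cdf μ q ≤ 1/2 := by
    rw [← hL]
    refine le_of_tendsto ((monotone_cdf μ).tendsto_leftLim q) ?_
    filter_upwards [self_mem_nhdsWithin] with x hx
    by_contra hgt
    have hxS : x ∈ S := le_of_lt (not_le.mp hgt)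
    have : q ≤ x := hq ▸ csInf_le hbdd hxS
    exact absurd hx (not_lt.mpr this)
  linarith

/-- If the absolutely continuous distribution functions F (of μ) and G (of ν) have equal
medians, then I₁ + I₂ = 1, where
I₂ = 2(∫_{F⁻¹(1/2)}^∞ G dF − ∫_{−∞}^{F⁻¹(1/2)} G dF) and I₁ is defined analogously with the
roles of F and G interchanged. -/
theorem overlap_indices_sum_eq_one_of_equal_medians
    (μ ν : Measure ℝ) [IsProbabilityMeasure μ] [IsProbabilityMeasure ν]
    (hμ : μ ≪ volume) (hν : ν ≪ volume)
    (qF qG : ℝ)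
    (hqF : qF = sInf {x : ℝ | (1:ℝ)/2 ≤ cdf μ x})
    (hqG : qG = sInf {x : ℝ | (1:ℝ)/2 ≤ cdf ν x})
    (hmed : qF = qG)
    (I1 I2 : ℝ)
    (hI2 : I2 = 2 * ((∫ x in Ici qF, cdf ν x ∂μ) - ∫ x in Iio qF, cdf ν x ∂μ))
    (hI1 : I1 = 2 * ((∫ x in Ici qG, cdf μ x ∂ν) - ∫ x in Iio qG, cdf μ x ∂ν)) :
    I1 + I2 = 1 := by
  subst hmed
  haveI h1 : NullSingletonClass μ := ⟨fun x => hμ Real.volume_singleton⟩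
  haveI h2 : NullSingletonClass ν := ⟨fun x => hν Real.volume_singleton⟩
  have hFq : cdf μ qF = 1/2 := aux_cdf_median μ hqF
  have hGq : cdf ν qF = 1/2 := aux_cdf_median ν hqG
  set P := μ.prod ν with hP
  -- measurability of basic sets
  have hle_meas : MeasurableSet {p : ℝ × ℝ | p.2 ≤ p.1} :=
    measurableSet_le measurable_snd measurable_fst
  have hle_meas' : MeasurableSet {p : ℝ × ℝ | p.1 ≤ p.2} :=
    measurableSet_le measurable_fst measurable_snd
  have hdiag_meas : MeasurableSet {p : ℝ × ℝ | p.1 = p.2} :=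
    measurableSet_eq_fun measurable_fst measurable_snd
  -- the diagonal is null
  have h_diag : P {p : ℝ × ℝ | p.1 = p.2} = 0 := by
    rw [hP, Measure.prod_apply hdiag_meas]
    have hpre : ∀ x : ℝ, (Prod.mk x ⁻¹' {p : ℝ × ℝ | p.1 = p.2}) = {x} := by
      intro x; ext y; simp [eq_comm]
    simp [hpre, measure_singleton]
  -- measures of half lines
  have hμq : μ (Iio qF) = ENNReal.ofReal (1/2) := by
    rw [measure_congr Iio_ae_eq_Iic, ← ofReal_cdf μ qF, hFq]
  have hνq : ν (Iio qF) = ENNReal.ofReal (1/2) := by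
    rw [measure_congr Iio_ae_eq_Iic, ← ofReal_cdf ν qF, hGq]
  -- the four quantities
  set a := P {p : ℝ × ℝ | p.1 ∈ Iio qF ∧ p.2 ≤ p.1} with ha_def
  set b := P {p : ℝ × ℝ | p.1 ∈ Ici qF ∧ p.2 ≤ p.1} with hb_def
  set c := P {p : ℝ × ℝ | p.2 ∈ Iio qF ∧ p.1 ≤ p.2} with hc_def
  set d := P {p : ℝ × ℝ | p.2 ∈ Ici qF ∧ p.1 ≤ p.2} with hd_def
  have ha_meas : MeasurableSet {p : ℝ × ℝ | p.1 ∈ Iio qF ∧ p.2 ≤ p.1} :=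
    (measurable_fst measurableSet_Iio).inter hle_meas
  have hb_meas : MeasurableSet {p : ℝ × ℝ | p.1 ∈ Ici qF ∧ p.2 ≤ p.1} :=
    (measurable_fst measurableSet_Ici).inter hle_meas
  have hc_meas : MeasurableSet {p : ℝ × ℝ | p.2 ∈ Iio qF ∧ p.1 ≤ p.2} :=
    (measurable_snd measurableSet_Iio).inter hle_meas'
  have hd_meas : MeasurableSet {p : ℝ × ℝ | p.2 ∈ Ici qF ∧ p.1 ≤ p.2} :=
    (measurable_snd measurableSet_Ici).inter hle_meas'
  -- the integrals in terms of a, b, c, d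
  have hA : ∫ x in Iio qF, cdf ν x ∂μ = a.toReal := by
    rw [aux_integral_cdf μ ν measurableSet_Iio]
  have hB : ∫ x in Ici qF, cdf ν x ∂μ = b.toReal := by
    rw [aux_integral_cdf μ ν measurableSet_Ici]
  have hswap : ∀ (s : Set ℝ), MeasurableSet s →
      ((ν.prod μ) {p : ℝ × ℝ | p.1 ∈ s ∧ p.2 ≤ p.1}) =
        P {p : ℝ × ℝ | p.2 ∈ s ∧ p.1 ≤ p.2} := by
    intro s hs
    have hTs : MeasurableSet {p : ℝ × ℝ | p.1 ∈ s ∧ p.2 ≤ p.1} :=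
      (measurable_fst hs).inter hle_meas
    rw [hP, ← Measure.prod_swap, Measure.map_apply measurable_swap hTs]
    congr 1
  have hC : ∫ x in Iio qF, cdf μ x ∂ν = c.toReal := by
    rw [aux_integral_cdf ν μ measurableSet_Iio, hswap _ measurableSet_Iio]
  have hD : ∫ x in Ici qF, cdf μ x ∂ν = d.toReal := by
    rw [aux_integral_cdf ν μ measurableSet_Ici, hswap _ measurableSet_Ici]
  -- a + b = P {p.2 ≤ p.1}, c + d = P {p.1 ≤ p.2}
  have h_ab : a + b = P {p : ℝ × ℝ | p.2 ≤ p.1} := by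
    rw [ha_def, hb_def, ← measure_union ?_ hb_meas]
    · congr 1
      ext p
      simp only [mem_union, mem_setOf_eq, mem_Iio, mem_Ici]
      rcases lt_or_ge p.1 qF with h | h <;> tauto
    · rw [Set.disjoint_left]
      rintro p ⟨hp1, -⟩ ⟨hp2, -⟩
      exact absurd (mem_Ici.mp hp2) (not_le.mpr (mem_Iio.mp hp1))
  have h_cd : c + d = P {p : ℝ × ℝ | p.1 ≤ p.2} := by
    rw [hc_def, hd_def, ← measure_union ?_ hd_meas]
    · congr 1
      ext p
      simp only [mem_union, mem_setOf_eq, mem_Iio, mem_Ici]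
      rcases lt_or_ge p.2 qF with h | h <;> tauto
    · rw [Set.disjoint_left]
      rintro p ⟨hp1, -⟩ ⟨hp2, -⟩
      exact absurd (mem_Ici.mp hp2) (not_le.mpr (mem_Iio.mp hp1))
  -- total sum is 1
  have h_sum : P {p : ℝ × ℝ | p.2 ≤ p.1} + P {p : ℝ × ℝ | p.1 ≤ p.2} = 1 := by
    have h := measure_union_add_inter (μ := P) {p : ℝ × ℝ | p.2 ≤ p.1} hle_meas'
    have hu : {p : ℝ × ℝ | p.2 ≤ p.1} ∪ {p : ℝ × ℝ | p.1 ≤ p.2} = univ := by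
      ext p; simp [le_total p.2 p.1]
    have hi : {p : ℝ × ℝ | p.2 ≤ p.1} ∩ {p : ℝ × ℝ | p.1 ≤ p.2} =
        {p : ℝ × ℝ | p.1 = p.2} := by
      ext p
      simp only [mem_inter_iff, mem_setOf_eq]
      exact ⟨fun ⟨h1, h2⟩ => le_antisymm h2 h1, fun h => ⟨h.ge, h.le⟩⟩
    rw [hu, hi, h_diag, add_zero, measure_univ] at h
    exact h.symm
  -- a + c = 1/4
  have h_ac : a + c = ENNReal.ofReal (1/4) := by
    have h := measure_union_add_inter (μ := P)
      {p : ℝ × ℝ | p.1 ∈ Iio qF ∧ p.2 ≤ p.1} hc_meas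
    have hu : {p : ℝ × ℝ | p.1 ∈ Iio qF ∧ p.2 ≤ p.1} ∪
        {p : ℝ × ℝ | p.2 ∈ Iio qF ∧ p.1 ≤ p.2} = Iio qF ×ˢ Iio qF := by
      ext p
      simp only [mem_union, mem_setOf_eq, mem_Iio, mem_prod]
      constructor
      · rintro (⟨h1, h2⟩ | ⟨h1, h2⟩)
        · exact ⟨h1, lt_of_le_of_lt h2 h1⟩
        · exact ⟨lt_of_le_of_lt h2 h1, h1⟩
      · rintro ⟨h1, h2⟩
        rcases le_total p.2 p.1 with h | h
        · exact Or.inl ⟨h1, h⟩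
        · exact Or.inr ⟨h2, h⟩
    have hi : P ({p : ℝ × ℝ | p.1 ∈ Iio qF ∧ p.2 ≤ p.1} ∩
        {p : ℝ × ℝ | p.2 ∈ Iio qF ∧ p.1 ≤ p.2}) = 0 := by
      refine measure_mono_null ?_ h_diag
      rintro p ⟨⟨-, h1⟩, ⟨-, h2⟩⟩
      exact le_antisymm h2 h1
    rw [hu, hi, add_zero] at h
    rw [ha_def, hc_def, ← h, hP, Measure.prod_prod, hμq, hνq,
      ← ENNReal.ofReal_mul (by norm_num)]
    norm_num
  -- finiteness
  have hfin : ∀ s : Set (ℝ × ℝ), P s ≠ ⊤ := fun s => measure_ne_top _ _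
  have ha_fin : a ≠ ⊤ := hfin _
  have hb_fin : b ≠ ⊤ := hfin _
  have hc_fin : c ≠ ⊤ := hfin _
  have hd_fin : d ≠ ⊤ := hfin _
  -- real versions
  have hr1 : a.toReal + b.toReal + c.toReal + d.toReal = 1 := by
    have e1 : a + b + (c + d) = 1 := by rw [h_ab, h_cd, h_sum]
    have := congrArg ENNReal.toReal e1
    rwa [ENNReal.toReal_add (ENNReal.add_ne_top.mpr ⟨ha_fin, hb_fin⟩)
        (ENNReal.add_ne_top.mpr ⟨hc_fin, hd_fin⟩),
      ENNReal.toReal_add ha_fin hb_fin, ENNReal.toReal_add hc_fin hd_fin,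
      ENNReal.toReal_one, ← add_assoc] at this
  have hr2 : a.toReal + c.toReal = 1/4 := by
    have := congrArg ENNReal.toReal h_ac
    rwa [ENNReal.toReal_add ha_fin hc_fin, ENNReal.toReal_ofReal (by norm_num)] at this
  rw [hI1, hI2, hA, hB, hC, hD]
  linarith
end

section
/- For h(t) = t/2 and h̃(t) = 1/2 + t/2 on [0,1], one has ‖h‖* = ‖h̃‖* = 1/48 and ⟨h, h̃⟩* = 1/48, hence ‖h‖* + ‖h̃‖* − 2⟨h, h̃⟩* = 0; combined with the Brownian-bridge cross terms this gives that under F = G the asymptotic variance σ²_{I₂} of the overlap index estimator satisfies σ²_{I₂} = σ²_θ. -/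
open MeasureTheory Set

/-- The functional ‖h‖* = ∫₀¹ h² dt − (∫₀¹ h dt)². -/
noncomputable def normStar (h : ℝ → ℝ) : ℝ :=
  (∫ t in Ioo (0:ℝ) 1, (h t)^2) - (∫ t in Ioo (0:ℝ) 1, h t)^2

/-- The functional ⟨h, h̃⟩* = ∫₀¹ h h̃ dt − (∫₀¹ h dt)(∫₀¹ h̃ dt). -/
noncomputable def innerStar (h h' : ℝ → ℝ) : ℝ :=
  (∫ t in Ioo (0:ℝ) 1, h t * h' t)
    - (∫ t in Ioo (0:ℝ) 1, h t) * (∫ t in Ioo (0:ℝ) 1, h' t)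

/-- The Brownian-bridge covariance of ∫₀¹ B(h(s)) ds and ∫₀¹ B(h̃(t)) dt:
∫₀¹∫₀¹ (min(h(s), h̃(t)) − h(s)h̃(t)) ds dt. -/
noncomputable def covBB (h h' : ℝ → ℝ) : ℝ :=
  ∫ s in Ioo (0:ℝ) 1, ∫ t in Ioo (0:ℝ) 1, (min (h s) (h' t) - h s * h' t)

lemma ioo01 (f : ℝ → ℝ) : ∫ t in Ioo (0:ℝ) 1, f t = ∫ t in (0:ℝ)..1, f t := by
  rw [intervalIntegral.integral_of_le zero_le_one,
    MeasureTheory.integral_Ioc_eq_integral_Ioo]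

lemma poly2 (a b c : ℝ) : ∫ t in (0:ℝ)..1, (a + b*t + c*t^2) = a + b/2 + c/3 := by
  have i1 : IntervalIntegrable (fun _ : ℝ => a) volume 0 1 := intervalIntegrable_const
  have i2 : IntervalIntegrable (fun t : ℝ => b*t) volume 0 1 :=
    (continuous_const.mul continuous_id).intervalIntegrable 0 1
  have i3 : IntervalIntegrable (fun t : ℝ => c*t^2) volume 0 1 :=
    (continuous_const.mul (continuous_pow 2)).intervalIntegrable 0 1
  rw [intervalIntegral.integral_add (i1.add i2) i3, intervalIntegral.integral_add i1 i2,
    intervalIntegral.integral_const, intervalIntegral.integral_const_mul,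
    intervalIntegral.integral_const_mul, integral_id, integral_pow, smul_eq_mul]
  ring

lemma poly2' (a b c : ℝ) : ∫ t in Ioo (0:ℝ) 1, (a + b*t + c*t^2) = a + b/2 + c/3 := by
  rw [ioo01]; exact poly2 a b c

lemma intmin (s : ℝ) (hs0 : 0 ≤ s) (hs1 : s ≤ 1) :
    ∫ t in (0:ℝ)..1, min s t = s - s^2/2 := by
  have imin : ∀ a b : ℝ, IntervalIntegrable (fun t => min s t) volume a b :=
    fun a b => (continuous_const.min continuous_id).intervalIntegrable a b
  rw [← intervalIntegral.integral_add_adjacent_intervals (imin 0 s) (imin s 1)]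
  have h1 : ∫ t in (0:ℝ)..s, min s t = ∫ t in (0:ℝ)..s, t := by
    apply intervalIntegral.integral_congr
    intro t htm
    rw [uIcc_of_le hs0] at htm
    exact min_eq_right htm.2
  have h2 : ∫ t in s..1, min s t = ∫ t in s..1, (s:ℝ) := by
    apply intervalIntegral.integral_congr
    intro t htm
    rw [uIcc_of_le hs1] at htm
    exact min_eq_left htm.1
  rw [h1, h2, integral_id, intervalIntegral.integral_const]
  simp; ring

lemma inner_gen (s c a b : ℝ) (hs0 : 0 ≤ s) (hs1 : s ≤ 1) :
    ∫ t in Ioo (0:ℝ) 1, (c * min s t + (a + b*t + 0*t^2))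
      = c*(s - s^2/2) + (a + b/2 + 0/3) := by
  have i1 : IntervalIntegrable (fun t : ℝ => c * min s t) volume 0 1 :=
    (continuous_const.mul (continuous_const.min continuous_id)).intervalIntegrable 0 1
  have i2 : IntervalIntegrable (fun t : ℝ => a + b*t + 0*t^2) volume 0 1 :=
    ((continuous_const.add (continuous_const.mul continuous_id)).add
      (continuous_const.mul (continuous_pow 2))).intervalIntegrable 0 1
  rw [ioo01, intervalIntegral.integral_add i1 i2,
    intervalIntegral.integral_const_mul, intmin s hs0 hs1, poly2]

lemma cov_id : covBB (fun t => t) (fun t => t) = 1/12 := by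
  unfold covBB
  rw [ioo01]
  have key : ∫ s in (0:ℝ)..1, ∫ t in Ioo (0:ℝ) 1, (min s t - s * t)
      = ∫ s in (0:ℝ)..1, (0 + (1/2)*s + (-(1/2))*s^2) := by
    apply intervalIntegral.integral_congr
    intro s hsm
    rw [uIcc_of_le zero_le_one] at hsm
    beta_reduce
    have e1 : ∫ t in Ioo (0:ℝ) 1, (min s t - s * t)
        = ∫ t in Ioo (0:ℝ) 1, (1 * min s t + (0 + (-s)*t + 0*t^2)) := by
      apply setIntegral_congr_fun measurableSet_Ioo
      intro t _; beta_reduce; ring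
    rw [e1, inner_gen s 1 0 (-s) hsm.1 hsm.2]; ring
  rw [key, poly2]; norm_num

lemma cov_hh : covBB (fun t => t/2) (fun t => t/2) = 5/48 := by
  unfold covBB
  rw [ioo01]
  have key : ∫ s in (0:ℝ)..1, ∫ t in Ioo (0:ℝ) 1, (min (s/2) (t/2) - s/2 * (t/2))
      = ∫ s in (0:ℝ)..1, (0 + (3/8)*s + (-(1/4))*s^2) := by
    apply intervalIntegral.integral_congr
    intro s hsm
    rw [uIcc_of_le zero_le_one] at hsm
    beta_reduce
    have e1 : ∫ t in Ioo (0:ℝ) 1, (min (s/2) (t/2) - s/2 * (t/2))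
        = ∫ t in Ioo (0:ℝ) 1, ((1/2) * min s t + (0 + (-(s/4))*t + 0*t^2)) := by
      apply setIntegral_congr_fun measurableSet_Ioo
      intro t _
      beta_reduce
      have hm : min (s/2) (t/2) = (min s t)/2 := by
        rcases le_total s t with hle | hle
        · rw [min_eq_left hle, min_eq_left (by linarith)]
        · rw [min_eq_right hle, min_eq_right (by linarith)]
      rw [hm]; ring
    rw [e1, inner_gen s (1/2) 0 (-(s/4)) hsm.1 hsm.2]; ring
  rw [key, poly2]; norm_num

lemma cov_tt : covBB (fun t => 1/2 + t/2) (fun t => 1/2 + t/2) = 5/48 := by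
  unfold covBB
  rw [ioo01]
  have key : ∫ s in (0:ℝ)..1,
        ∫ t in Ioo (0:ℝ) 1, (min (1/2 + s/2) (1/2 + t/2) - (1/2 + s/2) * (1/2 + t/2))
      = ∫ s in (0:ℝ)..1, (1/8 + (1/8)*s + (-(1/4))*s^2) := by
    apply intervalIntegral.integral_congr
    intro s hsm
    rw [uIcc_of_le zero_le_one] at hsm
    beta_reduce
    have e1 : ∫ t in Ioo (0:ℝ) 1, (min (1/2 + s/2) (1/2 + t/2) - (1/2 + s/2) * (1/2 + t/2))
        = ∫ t in Ioo (0:ℝ) 1, ((1/2) * min s t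
            + ((1/2 - (1/2 + s/2)/2) + (-((1/2 + s/2)/2))*t + 0*t^2)) := by
      apply setIntegral_congr_fun measurableSet_Ioo
      intro t _
      beta_reduce
      have hm : min (1/2 + s/2) (1/2 + t/2) = 1/2 + (min s t)/2 := by
        rcases le_total s t with hle | hle
        · rw [min_eq_left hle, min_eq_left (by linarith)]
        · rw [min_eq_right hle, min_eq_right (by linarith)]
      rw [hm]; ring
    rw [e1, inner_gen s (1/2) (1/2 - (1/2 + s/2)/2) (-((1/2 + s/2)/2)) hsm.1 hsm.2]; ring
  rw [key, poly2]; norm_num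

lemma cov_hht : covBB (fun t => t/2) (fun t => 1/2 + t/2) = 1/16 := by
  unfold covBB
  rw [ioo01]
  have key : ∫ s in (0:ℝ)..1,
        ∫ t in Ioo (0:ℝ) 1, (min (s/2) (1/2 + t/2) - s/2 * (1/2 + t/2))
      = ∫ s in (0:ℝ)..1, (0 + (1/8)*s + 0*s^2) := by
    apply intervalIntegral.integral_congr
    intro s hsm
    rw [uIcc_of_le zero_le_one] at hsm
    beta_reduce
    have e1 : ∫ t in Ioo (0:ℝ) 1, (min (s/2) (1/2 + t/2) - s/2 * (1/2 + t/2))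
        = ∫ t in Ioo (0:ℝ) 1, (0 * min s t + ((s/2 - s/4) + (-(s/4))*t + 0*t^2)) := by
      apply setIntegral_congr_fun measurableSet_Ioo
      intro t htm
      beta_reduce
      have hm : min (s/2) (1/2 + t/2) = s/2 :=
        min_eq_left (by have := htm.1; linarith [hsm.2])
      rw [hm]; ring
    rw [e1, inner_gen s 0 (s/2 - s/4) (-(s/4)) hsm.1 hsm.2]; ring
  rw [key, poly2]; norm_num


/-- For h(t) = t/2 and h̃(t) = 1/2 + t/2 one has ‖h‖* = ‖h̃‖* = ⟨h,h̃⟩* = 1/48, hence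
‖h‖* + ‖h̃‖* − 2⟨h,h̃⟩* = 0; and, computing with the Brownian-bridge covariances (here
G∘F⁻¹ = id, G∘F₁⁻¹ = h, G∘F₂⁻¹ = h̃ under F = G), the asymptotic variance of the overlap index
estimator equals that of the Mann-Whitney estimator: σ²_{I₂} = σ²_θ. -/
theorem variance_I2_eq_variance_theta_under_null
    (ν : ℝ) (hν : 0 < ν)
    (h ht : ℝ → ℝ) (hh : h = fun t => t/2) (hht : ht = fun t => 1/2 + t/2)
    (σθ σI2 : ℝ)
    (hσθ : σθ = ν * covBB (fun t => t) (fun t => t) + covBB (fun t => t) (fun t => t))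
    (hσI2 : σI2 = ν * (covBB h h + covBB ht ht - 2 * covBB h ht)
                + (covBB h h + covBB ht ht - 2 * covBB h ht)) :
    normStar h = 1/48 ∧ normStar ht = 1/48 ∧ innerStar h ht = 1/48 ∧
    normStar h + normStar ht - 2 * innerStar h ht = 0 ∧ σI2 = σθ := by
  subst hh hht hσθ hσI2
  have n1 : normStar (fun t => t/2) = 1/48 := by
    unfold normStar
    have e1 : ∫ t in Ioo (0:ℝ) 1, ((fun t : ℝ => t/2) t)^2
        = ∫ t in Ioo (0:ℝ) 1, (0 + 0*t + (1/4)*t^2) := by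
      apply setIntegral_congr_fun measurableSet_Ioo; intro t _; ring
    have e2 : ∫ t in Ioo (0:ℝ) 1, (fun t : ℝ => t/2) t
        = ∫ t in Ioo (0:ℝ) 1, (0 + (1/2)*t + 0*t^2) := by
      apply setIntegral_congr_fun measurableSet_Ioo; intro t _; ring
    rw [e1, e2, poly2', poly2']; norm_num
  have n2 : normStar (fun t => 1/2 + t/2) = 1/48 := by
    unfold normStar
    have e1 : ∫ t in Ioo (0:ℝ) 1, ((fun t : ℝ => 1/2 + t/2) t)^2
        = ∫ t in Ioo (0:ℝ) 1, (1/4 + (1/2)*t + (1/4)*t^2) := by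
      apply setIntegral_congr_fun measurableSet_Ioo; intro t _; ring
    have e2 : ∫ t in Ioo (0:ℝ) 1, (fun t : ℝ => 1/2 + t/2) t
        = ∫ t in Ioo (0:ℝ) 1, (1/2 + (1/2)*t + 0*t^2) := by
      apply setIntegral_congr_fun measurableSet_Ioo; intro t _; ring
    rw [e1, e2, poly2', poly2']; norm_num
  have n3 : innerStar (fun t => t/2) (fun t => 1/2 + t/2) = 1/48 := by
    unfold innerStar
    have e1 : ∫ t in Ioo (0:ℝ) 1, (fun t : ℝ => t/2) t * (fun t : ℝ => 1/2 + t/2) t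
        = ∫ t in Ioo (0:ℝ) 1, (0 + (1/4)*t + (1/4)*t^2) := by
      apply setIntegral_congr_fun measurableSet_Ioo; intro t _; ring
    have e2 : ∫ t in Ioo (0:ℝ) 1, (fun t : ℝ => t/2) t
        = ∫ t in Ioo (0:ℝ) 1, (0 + (1/2)*t + 0*t^2) := by
      apply setIntegral_congr_fun measurableSet_Ioo; intro t _; ring
    have e3 : ∫ t in Ioo (0:ℝ) 1, (fun t : ℝ => 1/2 + t/2) t
        = ∫ t in Ioo (0:ℝ) 1, (1/2 + (1/2)*t + 0*t^2) := by
      apply setIntegral_congr_fun measurableSet_Ioo; intro t _; ring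
    rw [e1, e2, e3, poly2', poly2', poly2']; norm_num
  refine ⟨n1, n2, n3, by rw [n1, n2, n3]; ring, ?_⟩
  rw [cov_id, cov_hh, cov_tt, cov_hht]
  ring
end

section
/- For a ∈ [0, 1/2] and b ∈ [1/2, 1], with F uniform on [0,1] and G uniform on [a,b], the map (a,b) ↦ (θ, I₂) has inverse given by a = (−2θ + I₂ + 1 ± √(4θ(1−θ) + I₂(I₂−2)))/2 and b = 2 − a − 2θ. -/
/- With F uniform on [0,1], θ = ∫₀¹ G = 1 - (a+b)/2 and ∫₀^{1/2} G = (1/2 - a)²/(2(b-a)). Writing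
`E = I₂ + b - a - 1`, these give `E = (1-2a)(2b-1)/(2(b-a)) ≥ 0` and `4θ(1-θ) + I₂(I₂-2) = E²`,
so the square root is `E` and the minus sign recovers `a`. The integral formulas remain valid for
`a = b` through the convention `x / 0 = 0`; that case forces `a = b = 1/2`, where the final
identity is checked directly. -/

open MeasureTheory Set

/-- The cdf of the uniform distribution on [a, b]. -/
noncomputable def unifCdf (a b x : ℝ) : ℝ :=
  if x < a then 0 else if b ≤ x then 1 else (x - a) / (b - a)

section UnifCdf

variable {a b x : ℝ}

lemma unifCdf_of_lt (hx : x < a) : unifCdf a b x = 0 := if_pos hx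

lemma unifCdf_of_mem_Ioo (hx : x ∈ Ioo a b) : unifCdf a b x = (x - a) / (b - a) := by
  rw [unifCdf, if_neg hx.1.le.not_gt, if_neg hx.2.not_ge]

lemma unifCdf_of_le_of_le (hab : a ≤ b) (hx : b ≤ x) : unifCdf a b x = 1 := by
  rw [unifCdf, if_neg (hab.trans hx).not_gt, if_pos hx]

lemma unifCdf_monotone : Monotone (unifCdf a b) := by
  intro x y hxy
  unfold unifCdf
  split_ifs <;> first
    | rfl
    | linarith
    | exact div_nonneg (by linarith) (by linarith)
    | exact div_le_one_of_le₀ (by linarith) (by linarith)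
    | exact div_le_div_of_nonneg_right (by linarith) (by linarith)

variable {p q t : ℝ}

lemma integral_unifCdf_of_le_left (hpq : p ≤ q) (hq : q ≤ a) :
    ∫ x in p..q, unifCdf a b x = 0 := by
  rw [intervalIntegral.integral_congr_Ioo_of_le hpq (g := fun _ => 0)
    (fun x hx => unifCdf_of_lt (hx.2.trans_le hq))]
  simp

lemma integral_unifCdf_of_mem_Icc (ht : t ∈ Icc a b) :
    ∫ x in a..t, unifCdf a b x = (t - a) ^ 2 / (2 * (b - a)) := by
  rw [intervalIntegral.integral_congr_Ioo_of_le ht.1 (g := fun x => (x - a) / (b - a))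
    (fun x hx => unifCdf_of_mem_Ioo ⟨hx.1, hx.2.trans_le ht.2⟩), intervalIntegral.integral_div,
    intervalIntegral.integral_comp_sub_right (fun x => x), integral_id, sub_self,
    zero_pow two_ne_zero, sub_zero, div_div]

lemma integral_unifCdf_of_right_le (hab : a ≤ b) (hbp : b ≤ p) (hpq : p ≤ q) :
    ∫ x in p..q, unifCdf a b x = q - p := by
  rw [intervalIntegral.integral_congr_Ioo_of_le hpq (g := fun _ => 1)
    (fun x hx => unifCdf_of_le_of_le hab (hbp.trans hx.1.le))]
  simp

lemma intervalIntegrable_unifCdf : IntervalIntegrable (unifCdf a b) volume p q :=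
  unifCdf_monotone.intervalIntegrable

lemma integral_unifCdf_of_le_of_mem_Icc (hpa : p ≤ a) (ht : t ∈ Icc a b) :
    ∫ x in p..t, unifCdf a b x = (t - a) ^ 2 / (2 * (b - a)) := by
  rw [← intervalIntegral.integral_add_adjacent_intervals intervalIntegrable_unifCdf
    intervalIntegrable_unifCdf, integral_unifCdf_of_le_left hpa le_rfl,
    integral_unifCdf_of_mem_Icc ht, zero_add]

lemma integral_unifCdf_of_le_of_le (hpa : p ≤ a) (hab : a ≤ b) (hbq : b ≤ q) :
    ∫ x in p..q, unifCdf a b x = q - (a + b) / 2 := by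
  rw [← intervalIntegral.integral_add_adjacent_intervals intervalIntegrable_unifCdf
    intervalIntegrable_unifCdf, integral_unifCdf_of_le_of_mem_Icc hpa ⟨hab, le_rfl⟩,
    integral_unifCdf_of_right_le hab le_rfl hbq]
  rcases hab.eq_or_lt with rfl | hlt
  · simp
  · field_simp [(sub_pos.2 hlt).ne']; ring

end UnifCdf

lemma sqrt_discriminant_eq {a b θ I2 : ℝ} (ha : a ≤ 1/2) (hb : 1/2 ≤ b)
    (hθ : θ = 1 - (a + b) / 2) (hI2 : I2 = 2 * θ - 4 * ((1/2 - a) ^ 2 / (2 * (b - a)))) :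
    Real.sqrt (4*θ*(1 - θ) + I2*(I2 - 2)) = I2 + b - a - 1 := by
  rcases (ha.trans hb).eq_or_lt with rfl | hab
  · obtain rfl : a = 1/2 := le_antisymm ha hb
    subst hθ hI2
    norm_num
  have hba : b - a ≠ 0 := (sub_pos.2 hab).ne'
  have hE : I2 + b - a - 1 = (1 - 2*a) * (2*b - 1) / (2 * (b - a)) := by
    subst hθ hI2; field_simp; ring
  have hD : 4*θ*(1 - θ) + I2*(I2 - 2) = (I2 + b - a - 1) ^ 2 := by
    subst hθ hI2; field_simp; ring
  have hE_nonneg : 0 ≤ I2 + b - a - 1 := by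
    rw [hE]; exact div_nonneg (mul_nonneg (by linarith) (by linarith)) (by linarith)
  rw [hD, Real.sqrt_sq hE_nonneg]

/-- For a ∈ [0, 1/2] and b ∈ [1/2, 1], with F uniform on [0,1] and G uniform on [a,b], the map
(a,b) ↦ (θ, I₂) is inverted by a = (−2θ + I₂ + 1 ± √(4θ(1−θ) + I₂(I₂−2)))/2 and
b = 2 − a − 2θ. -/
theorem uniform_parameters_from_theta_I2
    (a b : ℝ) (ha0 : 0 ≤ a) (ha : a ≤ 1/2) (hb : 1/2 ≤ b) (hb1 : b ≤ 1)
    (θ I2 : ℝ)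
    (hθ : θ = ∫ x in (0:ℝ)..1, unifCdf a b x)
    (hI2 : I2 = 2 * ((∫ x in (1/2:ℝ)..1, unifCdf a b x) - ∫ x in (0:ℝ)..(1/2), unifCdf a b x)) :
    (a = (-2*θ + I2 + 1 + Real.sqrt (4*θ*(1 - θ) + I2*(I2 - 2)))/2 ∨
     a = (-2*θ + I2 + 1 - Real.sqrt (4*θ*(1 - θ) + I2*(I2 - 2)))/2) ∧
    b = 2 - a - 2*θ := by
  have hθ' : θ = 1 - (a + b) / 2 := by
    rw [hθ, integral_unifCdf_of_le_of_le ha0 (ha.trans hb) hb1]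
  have hlow : ∫ x in (0:ℝ)..(1/2), unifCdf a b x = (1/2 - a) ^ 2 / (2 * (b - a)) :=
    integral_unifCdf_of_le_of_mem_Icc ha0 ⟨ha, hb⟩
  have hI2' : I2 = 2 * θ - 4 * ((1/2 - a) ^ 2 / (2 * (b - a))) := by
    rw [hI2, ← intervalIntegral.integral_interval_sub_left intervalIntegrable_unifCdf
      intervalIntegrable_unifCdf, ← hθ, hlow]
    ring
  refine ⟨Or.inr ?_, by linarith⟩
  rw [sqrt_discriminant_eq ha hb hθ' hI2', hθ']
  ring
end

section
/- If X₁ ≤ … ≤ Xₙ are ordered observations and the plug-in estimator of I₂ from samples of sizes n (from F) and m (from G) with n even is considered, then the estimator can be written as (2/(mn))(R·^{X>} − R·^{X<}) − n/(2m), where R·^{X<} is the sum of overall ranks of the X-observations below the X-median and R·^{X>} that of the X-observations above. -/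
open Finset
open scoped Classical

/-! At an even sample size `n = 2K` the empirical median `F̂ₙ⁻¹(1/2)` is the order statistic
`X_K`, so `Î₂` compares the `K` largest with the `K` smallest `X`'s. The overall rank of the
`i`-th order statistic is `i` plus the number of `Y`'s below it, and `m Ĝ_m` counts exactly those
`Y`'s. Hence `R·^{X>} − R·^{X<}` is `(mn/2) Î₂` plus the difference of the index sums over the upper
and the lower half, which is `K²` because the upper indices are the lower ones shifted by `K`. -/

section OrderStatistics

variable {ι α : Type*} [Fintype ι] [LinearOrder ι] [LinearOrder α] {X : ι → α}

theorem filter_apply_le_apply_eq_Iic [LocallyFiniteOrderBot ι] (hX : StrictMono X) (k : ι) :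
    ({i | X i ≤ X k} : Finset ι) = Iic k := by
  ext i
  simp only [mem_filter, mem_univ, true_and, mem_Iic, hX.le_iff_le]

theorem filter_apply_apply_lt_eq_Ioi [LocallyFiniteOrderTop ι] (hX : StrictMono X) (k : ι) :
    ({i | X k < X i} : Finset ι) = Ioi k := by
  ext i
  simp only [mem_filter, mem_univ, true_and, mem_Ioi, hX.lt_iff_lt]

end OrderStatistics

theorem card_filter_apply_le_apply {α : Type*} [LinearOrder α] {n : ℕ} {X : Fin n → α}
    (hX : StrictMono X) (k : Fin n) : #{i | X i ≤ X k} = k + 1 := by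
  rw [filter_apply_le_apply_eq_Iic hX, Fin.card_Iic]

theorem succ_le_card_filter_apply_le_iff {α : Type*} [LinearOrder α] {n : ℕ} {X : Fin n → α}
    (hX : Monotone X) (k : Fin n) (y : α) : k + 1 ≤ #{i | X i ≤ y} ↔ X k ≤ y := by
  constructor
  · intro h
    by_contra! hy
    have hsub : ({i | X i ≤ y} : Finset (Fin n)) ⊆ Iio k := fun i hi => by
      simp only [mem_filter, mem_univ, true_and] at hi
      exact mem_Iio.2 (hX.reflect_lt (hi.trans_lt hy))
    have := (card_le_card hsub).trans' h
    rw [Fin.card_Iio] at this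
    omega
  · intro h
    have hsub : Iic k ⊆ ({i | X i ≤ y} : Finset (Fin n)) := fun i hi =>
      mem_filter.2 ⟨mem_univ _, (hX (mem_Iic.1 hi)).trans h⟩
    simpa only [Fin.card_Iic] using card_le_card hsub

theorem sInf_setOf_half_le_empiricalCDF {n : ℕ} {X : Fin n → ℝ} (hX : Monotone X) (k : Fin n)
    (hk : n = 2 * (k + 1)) :
    sInf {y : ℝ | (1 : ℝ) / 2 ≤ (#{i | X i ≤ y} : ℝ) / n} = X k := by
  have hset : {y : ℝ | (1 : ℝ) / 2 ≤ (#{i | X i ≤ y} : ℝ) / n} = Set.Ici (X k) := by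
    ext y
    have hnk : (n : ℝ) = 2 * ((k : ℕ) + 1 : ℕ) := by exact_mod_cast hk
    rw [Set.mem_ofPred_eq, Set.mem_Ici, ← succ_le_card_filter_apply_le_iff hX, hnk,
      div_le_div_iff₀ two_pos (by positivity)]
    norm_cast
    omega
  rw [hset, csInf_Ici]

theorem sum_Ioi_sub_sum_Iic_val_add_one {n : ℕ} (k : Fin n) (hk : n = 2 * (k + 1)) :
    ∑ i ∈ Ioi k, ((i : ℝ) + 1) - ∑ i ∈ Iic k, ((i : ℝ) + 1) = ((k : ℝ) + 1) ^ 2 := by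
  have hsum (s : Finset (Fin n)) :
      ∑ i ∈ s, ((i : ℝ) + 1) = ∑ j ∈ s.map Fin.valEmbedding, ((j : ℝ) + 1) := by
    rw [sum_map]; rfl
  have hL : (Iic k).map Fin.valEmbedding = range ((k : ℕ) + 1) := by
    rw [Fin.map_valEmbedding_Iic]; ext; simp only [mem_Iic, mem_range]; omega
  have hU : (Ioi k).map Fin.valEmbedding = Ico ((k : ℕ) + 1) ((k + 1) + (k + 1)) := by
    rw [Fin.map_valEmbedding_Ioi]; ext; simp only [mem_Ioo, mem_Ico]; omega
  rw [hsum, hsum, hL, hU, sum_Ico_eq_sum_range, add_tsub_cancel_right, ← sum_sub_distrib]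
  simp only [Nat.cast_add, Nat.cast_one, add_sub_add_right_eq_sub, add_sub_cancel_right,
    sum_const, card_range, nsmul_eq_mul]
  ring

theorem I2hat_rank_representation_general
    (n m : ℕ) (hn : 0 < n) (hne : Even n)
    (X : Fin n → ℝ) (Y : Fin m → ℝ) (hmono : Monotone X)
    (hXi : Function.Injective X)
    (Fhat Ghat : ℝ → ℝ)
    (hF : ∀ x, Fhat x = ((univ.filter (fun i => X i ≤ x)).card : ℝ) / n)
    (hG : ∀ x, Ghat x = ((univ.filter (fun j => Y j ≤ x)).card : ℝ) / m)
    (q : ℝ) (hq : q = sInf {y : ℝ | (1:ℝ)/2 ≤ Fhat y})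
    (I2hat : ℝ)
    (hI2 : I2hat = 2 * ((1/(n:ℝ)) * ∑ i ∈ univ.filter (fun i => q < X i), Ghat (X i)
                      - (1/(n:ℝ)) * ∑ i ∈ univ.filter (fun i => X i ≤ q), Ghat (X i)))
    (rank : ℝ → ℕ)
    (hrank : ∀ v, rank v = (univ.filter (fun i => X i ≤ v)).card
                         + (univ.filter (fun j => Y j ≤ v)).card)
    (Rlt Rgt : ℕ)
    (hRlt : Rlt = ∑ i ∈ univ.filter (fun i => X i ≤ q), rank (X i))
    (hRgt : Rgt = ∑ i ∈ univ.filter (fun i => q < X i), rank (X i)) :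
    I2hat = 2 / ((m:ℝ) * n) * ((Rgt:ℝ) - (Rlt:ℝ)) - (n:ℝ) / (2 * m) := by
  have hX : StrictMono X := hmono.strictMono_of_injective hXi
  obtain ⟨K, hK⟩ := hne
  let k : Fin n := ⟨K - 1, by omega⟩
  have hk : n = 2 * ((k : ℕ) + 1) := by simp only [k]; omega
  have hqk : q = X k := by
    simp only [hq, hF]
    exact sInf_setOf_half_le_empiricalCDF hmono k hk
  let cY (v : ℝ) : ℝ := #{j | Y j ≤ v}
  have hrankX (i : Fin n) : (rank (X i) : ℝ) = ((i : ℝ) + 1) + cY (X i) := by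
    rw [hrank, card_filter_apply_le_apply hX]; push_cast; rfl
  have hR : (Rgt : ℝ) - Rlt =
      ((k : ℝ) + 1) ^ 2 + (∑ i ∈ Ioi k, cY (X i) - ∑ i ∈ Iic k, cY (X i)) := by
    rw [hRgt, hRlt, hqk, filter_apply_le_apply_eq_Iic hX, filter_apply_apply_lt_eq_Ioi hX]
    push_cast
    simp only [hrankX, sum_add_distrib, ← sum_Ioi_sub_sum_Iic_val_add_one k hk]
    ring
  have hI : I2hat = 2 / (n : ℝ) * ((∑ i ∈ Ioi k, cY (X i) - ∑ i ∈ Iic k, cY (X i)) / m) := by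
    rw [hI2, hqk, filter_apply_le_apply_eq_Iic hX, filter_apply_apply_lt_eq_Ioi hX]
    simp only [hG, ← sum_div]
    ring
  have hnk : (n : ℝ) = 2 * ((k : ℝ) + 1) := by exact_mod_cast hk
  rw [hI, hR, hnk]
  field_simp
  ring

/-- For ordered observations X₁ ≤ … ≤ Xₙ (n even) and Y₁, …, Y_m with no ties, the plug-in
estimator Î₂ = 2(∫_{F̂ₙ⁻¹(1/2)}^∞ Ĝ_m dF̂ₙ − ∫_{−∞}^{F̂ₙ⁻¹(1/2)} Ĝ_m dF̂ₙ) can be written as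
(2/(mn))(R·^{X>} − R·^{X<}) − n/(2m), where R·^{X<} (resp. R·^{X>}) is the sum of the overall
ranks of the X-observations below (resp. above) the X-median. -/
theorem I2hat_rank_representation
    (n m : ℕ) (hn : 0 < n) (hm : 0 < m) (hne : Even n)
    (X : Fin n → ℝ) (Y : Fin m → ℝ) (hmono : Monotone X)
    (hXi : Function.Injective X) (hYi : Function.Injective Y)
    (hXY : ∀ i j, X i ≠ Y j)
    (Fhat Ghat : ℝ → ℝ)
    (hF : ∀ x, Fhat x = ((univ.filter (fun i => X i ≤ x)).card : ℝ) / n)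
    (hG : ∀ x, Ghat x = ((univ.filter (fun j => Y j ≤ x)).card : ℝ) / m)
    (q : ℝ) (hq : q = sInf {y : ℝ | (1:ℝ)/2 ≤ Fhat y})
    (I2hat : ℝ)
    (hI2 : I2hat = 2 * ((1/(n:ℝ)) * ∑ i ∈ univ.filter (fun i => q < X i), Ghat (X i)
                      - (1/(n:ℝ)) * ∑ i ∈ univ.filter (fun i => X i ≤ q), Ghat (X i)))
    (rank : ℝ → ℕ)
    (hrank : ∀ v, rank v = (univ.filter (fun i => X i ≤ v)).card
                         + (univ.filter (fun j => Y j ≤ v)).card)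
    (Rlt Rgt : ℕ)
    (hRlt : Rlt = ∑ i ∈ univ.filter (fun i => X i ≤ q), rank (X i))
    (hRgt : Rgt = ∑ i ∈ univ.filter (fun i => q < X i), rank (X i)) :
    I2hat = 2 / ((m:ℝ) * n) * ((Rgt:ℝ) - (Rlt:ℝ)) - (n:ℝ) / (2 * m) :=
  I2hat_rank_representation_general n m hn hne X Y hmono hXi Fhat Ghat hF hG q hq I2hat hI2 rank
    hrank Rlt Rgt hRlt hRgt
end
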